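/- For every metric space H, either c_H(A) = 1 for every finite nonempty subset A ⊂ ℝ (with the metric induced from the absolute value), or there exist β > 0 and c > 0 such that c_H(P_n) ≥ c·n^β for every n ≥ 1. -/

import Mathlib

open scoped Classical in
/-- The Lipschitz norm `‖f‖_Lip = sup_{x ≠ y} d(f x, f y) / d(x, y)` of a map between
(pseudo)metric spaces. -/
noncomputable def lipNorm {X H : Type*} [PseudoMetricSpace X] [PseudoMetricSpace H]
    (f : X → H) : ℝ :=
  ⨆ p : X × X, if p.1 = p.2 then 0 else dist (f p.1) (f p.2) / dist p.1 p.2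

open scoped Classical in
/-- The Lipschitz norm of the inverse of an injective map `f`, i.e.
`‖f⁻¹‖_Lip = sup_{x ≠ y} d(x, y) / d(f x, f y)`. -/
noncomputable def colipNorm {X H : Type*} [PseudoMetricSpace X] [PseudoMetricSpace H]
    (f : X → H) : ℝ :=
  ⨆ p : X × X, if p.1 = p.2 then 0 else dist p.1 p.2 / dist (f p.1) (f p.2)

/-- The distortion `dist(f) = ‖f‖_Lip * ‖f⁻¹‖_Lip` of an (injective) map between metric spaces. -/
noncomputable def distortion {X H : Type*} [PseudoMetricSpace X] [PseudoMetricSpace H]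
    (f : X → H) : ℝ := lipNorm f * colipNorm f

/-- The path `P n = {0, 1, …, n}`, realized as a subset of `ℝ` (so that the induced metric is
`d(i,j) = |i - j|`). -/
def PathSet (n : ℕ) : Set ℝ := {x | ∃ k : ℕ, k ≤ n ∧ x = (k : ℝ)}

/-!
If every path `P m` embeds into `H` with distortion arbitrarily close to `1`, so does every finite
`A ⊆ ℝ`: scaled by a large factor and rounded down, `A` sits almost isometrically in some `P M`.

Otherwise some `P m` with `m ≥ 2` has `c_H(P m) > 1 + ε = (1 - η)⁻¹`. Then every `u`-Lipschitz map
of `P m` brings its endpoints within `(m - η) u` of each other, since otherwise the triangle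
inequality would make it an embedding of distortion at most `1 + ε`. Cutting a map of
`P (m ^ (k + 1))` into `m` blocks of length `m ^ k`, induction shows that an `L`-Lipschitz map of
`P (m ^ k)` brings its endpoints within `(m - η) ^ k L`, so its distortion is at least
`(m / (m - η)) ^ k`, a positive power of the length.
-/

section LipNorm

variable {X H : Type*}

theorem lipNorm_nonneg [PseudoMetricSpace X] [PseudoMetricSpace H] (f : X → H) :
    0 ≤ lipNorm f :=
  Real.iSup_nonneg fun _ => by split_ifs <;> positivity

theorem colipNorm_nonneg [PseudoMetricSpace X] [PseudoMetricSpace H] (f : X → H) :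
    0 ≤ colipNorm f :=
  Real.iSup_nonneg fun _ => by split_ifs <;> positivity

theorem lipNorm_le [PseudoMetricSpace X] [PseudoMetricSpace H] {f : X → H} {L : ℝ} (hL : 0 ≤ L)
    (h : ∀ x y, dist (f x) (f y) ≤ L * dist x y) : lipNorm f ≤ L :=
  Real.iSup_le (fun _ => by split_ifs; exacts [hL, div_le_of_le_mul₀ dist_nonneg hL (h _ _)]) hL

theorem colipNorm_le [PseudoMetricSpace X] [PseudoMetricSpace H] {f : X → H} {C : ℝ} (hC : 0 ≤ C)
    (h : ∀ x y, dist x y ≤ C * dist (f x) (f y)) : colipNorm f ≤ C :=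
  Real.iSup_le (fun _ => by split_ifs; exacts [hC, div_le_of_le_mul₀ dist_nonneg hC (h _ _)]) hC

theorem distortion_le_of_forall_dist_le [PseudoMetricSpace X] [PseudoMetricSpace H] {f : X → H}
    {L C : ℝ} (hL : 0 ≤ L) (hC : 0 ≤ C) (hlip : ∀ x y, dist (f x) (f y) ≤ L * dist x y)
    (hco : ∀ x y, dist x y ≤ C * dist (f x) (f y)) : distortion f ≤ L * C :=
  mul_le_mul (lipNorm_le hL hlip) (colipNorm_le hC hco) (colipNorm_nonneg f) hL

theorem injective_of_dist_le_mul [MetricSpace X] [PseudoMetricSpace H] {f : X → H} {C : ℝ}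
    (h : ∀ x y, dist x y ≤ C * dist (f x) (f y)) : Function.Injective f :=
  fun x y hxy => dist_le_zero.1 (by simpa [hxy] using h x y)

theorem dist_le_lipNorm_mul [MetricSpace X] [PseudoMetricSpace H] [Finite X] (f : X → H)
    (x y : X) : dist (f x) (f y) ≤ lipNorm f * dist x y := by
  rcases eq_or_ne x y with rfl | hxy
  · simp
  have h : dist (f x) (f y) / dist x y ≤ lipNorm f := by
    unfold lipNorm
    exact (le_ciSup (Set.finite_range _).bddAbove (x, y)).trans' (if_neg hxy).ge
  exact (div_le_iff₀ (dist_pos.2 hxy)).1 h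

theorem dist_le_colipNorm_mul [PseudoMetricSpace X] [MetricSpace H] [Finite X] {f : X → H}
    (hf : Function.Injective f) (x y : X) : dist x y ≤ colipNorm f * dist (f x) (f y) := by
  rcases eq_or_ne x y with rfl | hxy
  · simp
  have h : dist x y / dist (f x) (f y) ≤ colipNorm f := by
    unfold colipNorm
    exact (le_ciSup (Set.finite_range _).bddAbove (x, y)).trans' (if_neg hxy).ge
  exact (div_le_iff₀ (dist_pos.2 (hf.ne hxy))).1 h

end LipNorm

theorem Set.Finite.exists_pos_le_dist {X : Type*} [MetricSpace X] {A : Set X} (hA : A.Finite) :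
    ∃ s > 0, ∀ x ∈ A, ∀ y ∈ A, x ≠ y → s ≤ dist x y := by
  have : Finite A := hA.to_subtype
  rcases isEmpty_or_nonempty {p : A × A // p.1 ≠ p.2} with h | h
  · refine ⟨1, one_pos, fun x hx y hy hxy => (h.false ⟨(⟨x, hx⟩, ⟨y, hy⟩), ?_⟩).elim⟩
    simpa using hxy
  · obtain ⟨p, hp⟩ := Finite.exists_min fun p : {p : A × A // p.1 ≠ p.2} => dist p.1.1 p.1.2
    refine ⟨_, dist_pos.2 (Subtype.coe_injective.ne p.2), fun x hx y hy hxy => ?_⟩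
    exact hp ⟨(⟨x, hx⟩, ⟨y, hy⟩), by simpa using hxy⟩

theorem abs_dist_floor_sub_dist_le {u v : ℝ} (hu : 0 ≤ u) (hv : 0 ≤ v) :
    |dist ⌊u⌋₊ ⌊v⌋₊ - dist u v| ≤ 1 := by
  rw [Nat.dist_eq, Real.dist_eq]
  refine (abs_abs_sub_abs_le_abs_sub _ _).trans (abs_le.2 ⟨?_, ?_⟩) <;>
    linarith [Nat.floor_le hu, Nat.floor_le hv, Nat.lt_floor_add_one u, Nat.lt_floor_add_one v]

theorem Set.Finite.exists_nat_dist_le {A : Set ℝ} (hA : A.Finite) {δ : ℝ} (hδ : 0 < δ) :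
    ∃ (r : ℝ → ℕ) (a : ℝ), 0 < a ∧ ∀ x ∈ A, ∀ y ∈ A,
      a * dist x y ≤ dist (r x) (r y) ∧ dist (r x) (r y) ≤ (1 + δ) * a * dist x y := by
  obtain ⟨s, hs, hgap⟩ := hA.exists_pos_le_dist
  obtain ⟨a₀, ha₀⟩ := hA.bddBelow
  set a := 2 / (δ * s)
  set scale := a + 1 / s
  have ha : 0 < a := by positivity
  -- Rounding moves each distance by at most `1 ≤ dist x y / s`, and `scale ∓ 1 / s = a, (1 + δ) a`.
  have hscale : (1 + δ) * a = scale + 1 / s := by simp only [a, scale]; field_simp; ring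
  refine ⟨fun x => ⌊scale * (x - a₀)⌋₊, a, ha, fun x hx y hy => ?_⟩
  have hround := abs_dist_floor_sub_dist_le (u := scale * (x - a₀)) (v := scale * (y - a₀))
    (by have := ha₀ hx; positivity) (by have := ha₀ hy; positivity)
  have hscaled : dist (scale * (x - a₀)) (scale * (y - a₀)) = scale * dist x y := by
    rw [Real.dist_eq, Real.dist_eq, ← mul_sub, abs_mul, abs_of_pos (by positivity)]; ring_nf
  rw [hscaled, abs_le] at hround
  rcases eq_or_ne x y with rfl | hxy
  · simp
  have hfar : 1 ≤ 1 / s * dist x y := by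
    rw [one_div_mul_eq_div, one_le_div hs]; exact hgap x hx y hy hxy
  have hlow : a * dist x y = scale * dist x y - 1 / s * dist x y := by simp only [scale]; ring
  have hup : (1 + δ) * a * dist x y = scale * dist x y + 1 / s * dist x y := by rw [hscale]; ring
  constructor <;> linarith

def PathEmbedsWith (H : Type*) [MetricSpace H] (m : ℕ) (D : ℝ) : Prop :=
  ∃ f : PathSet m → H, Function.Injective f ∧ distortion f ≤ D

section Paths

variable {H : Type*} [MetricSpace H]

namespace PathSet

variable {n : ℕ}

def proj (n k : ℕ) : PathSet n := ⟨(min k n : ℕ), min k n, min_le_right k n, rfl⟩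

noncomputable def idx (x : PathSet n) : ℕ := ⌊(x : ℝ)⌋₊

theorem proj_idx (x : PathSet n) : proj n (idx x) = x := by
  obtain ⟨_, k, hk, rfl⟩ := x
  simp [proj, idx, hk]

theorem idx_le (x : PathSet n) : idx x ≤ n := by
  obtain ⟨_, k, hk, rfl⟩ := x
  simpa [idx] using hk

theorem dist_proj {i j : ℕ} (hi : i ≤ n) (hj : j ≤ n) : dist (proj n i) (proj n j) = dist i j := by
  simp [proj, Subtype.dist_eq, Real.dist_eq, Nat.dist_eq, hi, hj]

theorem dist_eq_dist_idx (x y : PathSet n) : dist x y = dist (idx x) (idx y) := by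
  rw [← dist_proj (idx_le x) (idx_le y), proj_idx, proj_idx]

instance : Finite (PathSet n) :=
  Finite.of_surjective (fun i : Fin (n + 1) => proj n i) fun x =>
    ⟨⟨idx x, Nat.lt_succ_of_le (idx_le x)⟩, proj_idx x⟩

theorem dist_comp_proj_le (f : PathSet n → H) {i j : ℕ} (hi : i ≤ n) (hj : j ≤ n) :
    dist (f (proj n i)) (f (proj n j)) ≤ lipNorm f * dist i j := by
  simpa only [dist_proj hi hj] using dist_le_lipNorm_mul f (proj n i) (proj n j)

theorem dist_le_comp_proj {f : PathSet n → H} (hf : Function.Injective f) {i j : ℕ} (hi : i ≤ n)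
    (hj : j ≤ n) : dist i j ≤ colipNorm f * dist (f (proj n i)) (f (proj n j)) := by
  simpa only [dist_proj hi hj] using dist_le_colipNorm_mul hf (proj n i) (proj n j)

end PathSet

theorem pathEmbedsWith_of_forall_dist_le {G : ℕ → H} {m : ℕ} {L C : ℝ} (hL : 0 ≤ L) (hC : 0 ≤ C)
    (hlip : ∀ i ≤ m, ∀ j ≤ m, dist (G i) (G j) ≤ L * dist i j)
    (hco : ∀ i ≤ m, ∀ j ≤ m, dist i j ≤ C * dist (G i) (G j)) : PathEmbedsWith H m (L * C) := by
  have hco' (x y : PathSet m) : dist x y ≤ C * dist (G (PathSet.idx x)) (G (PathSet.idx y)) := by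
    rw [PathSet.dist_eq_dist_idx]; exact hco _ (PathSet.idx_le x) _ (PathSet.idx_le y)
  refine ⟨fun x => G (PathSet.idx x), injective_of_dist_le_mul hco',
    distortion_le_of_forall_dist_le hL hC (fun x y => ?_) hco'⟩
  rw [PathSet.dist_eq_dist_idx]; exact hlip _ (PathSet.idx_le x) _ (PathSet.idx_le y)

theorem PathEmbedsWith.mono {m m' : ℕ} {D : ℝ} (h : PathEmbedsWith H m D) (hm : m' ≤ m) :
    PathEmbedsWith H m' D := by
  obtain ⟨f, hf, hD⟩ := h
  obtain ⟨g, hg, hgD⟩ := pathEmbedsWith_of_forall_dist_le (G := fun i => f (PathSet.proj m i))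
    (lipNorm_nonneg f) (colipNorm_nonneg f)
    (fun i hi j hj => PathSet.dist_comp_proj_le f (hi.trans hm) (hj.trans hm))
    (fun i hi j hj => PathSet.dist_le_comp_proj hf (hi.trans hm) (hj.trans hm))
  exact ⟨g, hg, hgD.trans hD⟩

theorem exists_injective_distortion_le_of_forall_pathEmbedsWith
    (hpaths : ∀ m : ℕ, ∀ ε : ℝ, 0 < ε → PathEmbedsWith H m (1 + ε)) {A : Set ℝ} (hA : A.Finite)
    {ε : ℝ} (hε : 0 < ε) : ∃ f : A → H, Function.Injective f ∧ distortion f ≤ 1 + ε := by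
  obtain ⟨r, a, ha, hr⟩ := hA.exists_nat_dist_le (half_pos hε)
  obtain ⟨M, hM⟩ := (hA.image r).bddAbove
  have hrM {x : ℝ} (hx : x ∈ A) : r x ≤ M := hM ⟨x, hx, rfl⟩
  obtain ⟨g, hg, hgD⟩ := hpaths M (ε / (2 + ε)) (by positivity)
  set f : A → H := fun x => g (PathSet.proj M (r x))
  have hco (x y : A) : dist x y ≤ colipNorm g / a * dist (f x) (f y) := by
    rw [div_mul_eq_mul_div, le_div_iff₀ ha, mul_comm]
    exact (hr x x.2 y y.2).1.trans (PathSet.dist_le_comp_proj hg (hrM x.2) (hrM y.2))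
  have hlip (x y : A) : dist (f x) (f y) ≤ lipNorm g * ((1 + ε / 2) * a) * dist x y := by
    rw [mul_assoc]
    exact (PathSet.dist_comp_proj_le g (hrM x.2) (hrM y.2)).trans
      (mul_le_mul_of_nonneg_left (hr x x.2 y y.2).2 (lipNorm_nonneg g))
  refine ⟨f, injective_of_dist_le_mul hco, ?_⟩
  calc distortion f ≤ lipNorm g * ((1 + ε / 2) * a) * (colipNorm g / a) :=
        distortion_le_of_forall_dist_le (by have := lipNorm_nonneg g; positivity)
          (div_nonneg (colipNorm_nonneg g) ha.le) hlip hco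
    _ = distortion g * (1 + ε / 2) := by rw [distortion]; field_simp
    _ ≤ (1 + ε / (2 + ε)) * (1 + ε / 2) := by gcongr
    _ = 1 + ε := by field_simp; ring

theorem dist_le_mul_dist_of_dist_succ_le {X : Type*} [PseudoMetricSpace X] {G : ℕ → X} {n : ℕ}
    {u : ℝ} (h : ∀ t < n, dist (G t) (G (t + 1)) ≤ u) :
    ∀ i ≤ n, ∀ j ≤ n, dist (G i) (G j) ≤ u * dist i j := by
  intro i hi j hj
  wlog hij : i ≤ j generalizing i j
  · rw [dist_comm, dist_comm i]; exact this j hj i hi (le_of_not_ge hij)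
  have hsum := dist_le_Ico_sum_of_dist_le (f := G) hij (d := fun _ => u)
    fun {k} _ hk => h k (by omega)
  rw [Finset.sum_const, Nat.card_Ico, nsmul_eq_mul, Nat.cast_sub hij] at hsum
  rw [Nat.dist_eq, abs_sub_comm, abs_of_nonneg (by simpa using hij)]
  linarith

-- Otherwise `G` would satisfy `dist (G i) (G j) ≥ (j - i - η) u ≥ (1 - η) u (j - i)` for `i < j`.
theorem dist_le_of_not_pathEmbedsWith {m : ℕ} {η : ℝ} (hη : 0 < η) (hη1 : η < 1)
    (hm : ¬ PathEmbedsWith H m (1 - η)⁻¹) (G : ℕ → H) (u : ℝ)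
    (hG : ∀ i ≤ m, ∀ j ≤ m, dist (G i) (G j) ≤ u * dist i j) :
    dist (G 0) (G m) ≤ (m - η) * u := by
  by_contra! hlong
  have hu : 0 < u := by
    have := hG 0 m.zero_le m le_rfl
    rw [Nat.dist_eq, Nat.cast_zero, zero_sub, abs_neg, Nat.abs_cast] at this
    nlinarith
  have hco : ∀ i ≤ m, ∀ j ≤ m, dist i j ≤ ((1 - η) * u)⁻¹ * dist (G i) (G j) := by
    intro i hi j hj
    wlog hij : i ≤ j generalizing i j
    · rw [dist_comm, dist_comm (G i)]; exact this j hj i hi (le_of_not_ge hij)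
    rcases hij.eq_or_lt with rfl | hlt
    · simp
    have hdist (a b : ℕ) (hab : a ≤ b) : dist a b = (b : ℝ) - a := by
      rw [Nat.dist_eq, abs_sub_comm, abs_of_nonneg (by simpa using hab)]
    have hstart := hG 0 m.zero_le i hi
    have hend := hG j hj m le_rfl
    rw [hdist _ _ i.zero_le, Nat.cast_zero, sub_zero] at hstart
    rw [hdist _ _ hj] at hend
    have hgap : (1 : ℝ) ≤ j - i := by
      rw [le_sub_iff_add_le']; exact_mod_cast hlt
    have := dist_triangle4 (G 0) (G i) (G j) (G m)
    rw [hdist _ _ hij, inv_mul_eq_div, le_div_iff₀ (mul_pos (by linarith) hu)]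
    nlinarith [mul_nonneg (mul_nonneg hη.le hu.le) (sub_nonneg.2 hgap)]
  refine hm ?_
  convert pathEmbedsWith_of_forall_dist_le hu.le (by have := sub_pos.2 hη1; positivity) hG hco
    using 1
  field_simp

theorem dist_le_pow_mul_of_forall_dist_le {m : ℕ} {ρ : ℝ}
    (hcontr : ∀ (G : ℕ → H) (u : ℝ), (∀ i ≤ m, ∀ j ≤ m, dist (G i) (G j) ≤ u * dist i j) →
      dist (G 0) (G m) ≤ ρ * u)
    (k : ℕ) {F : ℕ → H} {L : ℝ} (hF : ∀ i ≤ m ^ k, ∀ j ≤ m ^ k, dist (F i) (F j) ≤ L * dist i j) :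
    dist (F 0) (F (m ^ k)) ≤ ρ ^ k * L := by
  induction k generalizing F with
  | zero => simpa [Nat.dist_eq] using hF 0 (by simp) 1 (by simp)
  | succ k ih =>
    set N := m ^ k
    have hblock : ∀ t < m, dist (F (t * N)) (F ((t + 1) * N)) ≤ ρ ^ k * L := by
      intro t ht
      have hsub : (t + 1) * N ≤ m ^ (k + 1) := by
        rw [pow_succ']; exact Nat.mul_le_mul_right N ht
      have := ih (F := fun i => F (t * N + i)) fun i hi j hj => by
        have := hF (t * N + i) (by nlinarith) (t * N + j) (by nlinarith)
        simpa [Nat.dist_eq] using this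
      simpa [add_mul, add_comm] using this
    have hG := dist_le_mul_dist_of_dist_succ_le (G := fun t => F (t * N)) hblock
    calc dist (F 0) (F (m ^ (k + 1))) = dist (F (0 * N)) (F (m * N)) := by rw [zero_mul, pow_succ']
      _ ≤ ρ * (ρ ^ k * L) := hcontr _ _ hG
      _ = ρ ^ (k + 1) * L := by ring

theorem pow_le_distortion_of_forall_dist_le {m n k : ℕ} {ρ : ℝ} (hρ : 0 < ρ)
    (hcontr : ∀ (G : ℕ → H) (u : ℝ), (∀ i ≤ m, ∀ j ≤ m, dist (G i) (G j) ≤ u * dist i j) →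
      dist (G 0) (G m) ≤ ρ * u)
    (hk : m ^ k ≤ n) {f : PathSet n → H} (hf : Function.Injective f) :
    (m / ρ) ^ k ≤ distortion f := by
  have hlong := dist_le_pow_mul_of_forall_dist_le hcontr k (F := fun i => f (PathSet.proj n i))
    fun i hi j hj => PathSet.dist_comp_proj_le f (hi.trans hk) (hj.trans hk)
  have hshort := PathSet.dist_le_comp_proj hf n.zero_le hk
  rw [Nat.dist_eq, Nat.cast_zero, zero_sub, abs_neg, Nat.abs_cast, Nat.cast_pow] at hshort
  rw [div_pow, div_le_iff₀ (by positivity), distortion]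
  calc (m : ℝ) ^ k ≤ colipNorm f * (ρ ^ k * lipNorm f) :=
        hshort.trans (mul_le_mul_of_nonneg_left hlong (colipNorm_nonneg f))
    _ = lipNorm f * colipNorm f * ρ ^ k := by ring

theorem inv_mul_rpow_logb_le_pow_log {b : ℕ} (hb : 2 ≤ b) {q : ℝ} (hq : 1 < q) (n : ℕ) :
    q⁻¹ * (n : ℝ) ^ Real.logb b q ≤ q ^ Nat.log b n := by
  have hb' : (1 : ℝ) < b := by exact_mod_cast hb
  have hn : (n : ℝ) ≤ (b : ℝ) ^ (Nat.log b n + 1) := by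
    exact_mod_cast (Nat.lt_pow_succ_log_self hb n).le
  have hpow : ((b : ℝ) ^ (Nat.log b n + 1)) ^ Real.logb b q = q ^ (Nat.log b n + 1) := by
    rw [← Real.rpow_natCast, ← Real.rpow_mul (by positivity), mul_comm,
      Real.rpow_mul (by positivity), Real.rpow_logb (by positivity) hb'.ne' (by positivity), Real.rpow_natCast]
  calc q⁻¹ * (n : ℝ) ^ Real.logb b q ≤ q⁻¹ * q ^ (Nat.log b n + 1) := by
        rw [← hpow]
        gcongr
        exact (Real.logb_pos hb' hq).le
    _ = q ^ Nat.log b n := by rw [pow_succ']; field_simp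

end Paths

/-- For every metric space `H`: either `c_H A = 1` for every finite nonempty
subset `A ⊆ ℝ` (every such `A` embeds in `H` with distortion arbitrarily close to 1), or
there are `β > 0` and `c > 0` with `c_H (P n) ≥ c * n ^ β` for all `n ≥ 1` (every injective
map of the path `P n` into `H` has distortion at least `c * n ^ β`). -/
theorem line_dichotomy (H : Type*) [MetricSpace H] :
    (∀ A : Set ℝ, A.Finite → A.Nonempty →
      ∀ ε : ℝ, 0 < ε → ∃ f : A → H, Function.Injective f ∧ distortion f ≤ 1 + ε) ∨
    (∃ β : ℝ, 0 < β ∧ ∃ c : ℝ, 0 < c ∧ ∀ n : ℕ, 1 ≤ n →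
      ∀ f : PathSet n → H, Function.Injective f → c * (n : ℝ) ^ β ≤ distortion f) := by
  by_cases hpaths : ∀ m : ℕ, ∀ ε : ℝ, 0 < ε → PathEmbedsWith H m (1 + ε)
  · exact Or.inl fun A hA _ ε hε =>
      exists_injective_distortion_le_of_forall_pathEmbedsWith hpaths hA hε
  push Not at hpaths
  obtain ⟨m₀, ε, hε, hm₀⟩ := hpaths
  set m := m₀ + 2
  set η := ε / (1 + ε)
  have hη : 0 < η := by positivity
  have hη1 : η < 1 := by rw [div_lt_one (by positivity)]; linarith
  have hm : ¬ PathEmbedsWith H m (1 - η)⁻¹ := by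
    have : (1 - η)⁻¹ = 1 + ε := by simp only [η]; field_simp; ring
    exact this ▸ fun h => hm₀ (h.mono (by omega))
  have hm2 : (2 : ℝ) ≤ m := by simp [m]
  have hmη : 0 < (m : ℝ) - η := by linarith
  set q := (m : ℝ) / (m - η)
  have hq : 1 < q := by rw [one_lt_div hmη]; linarith
  refine Or.inr ⟨Real.logb m q, Real.logb_pos (by linarith) hq, q⁻¹, by positivity,
    fun n hn f hf => ?_⟩
  calc q⁻¹ * (n : ℝ) ^ Real.logb m q ≤ q ^ Nat.log m n :=
        inv_mul_rpow_logb_le_pow_log (by omega) hq n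
    _ ≤ distortion f := pow_le_distortion_of_forall_dist_le hmη
        (dist_le_of_not_pathEmbedsWith hη hη1 hm) (Nat.pow_log_le_self m (by omega)) hf
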